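/- arXiv:1402.3464 — 2 statements merged into one kernel-verified Lean document; each statement's English description precedes it below -/
import Mathlib

section
/- Let ψ be a probability density on (0, ∞) and let p > 0, γ > 0, B > γ, δ > 0, ρ > 0. Define ∂I₁/∂ρ = (pγ/ρ^{p+1}) ∫_δ^{δ+ρ} (s−δ)^p ψ(s) ds, ∂I₂/∂ρ = (pγ/ρ^{p+1}) ∫_δ^{δ+ρ} s(s−δ)^p ψ(s) ds, ∂I₁/∂δ = (B−γ)ψ(δ) + (pγ/ρ^p) ∫_δ^{δ+ρ} (s−δ)^{p−1} ψ(s) ds, and ∂I₂/∂δ = (B−γ)δψ(δ) + (pγ/ρ^p) ∫_δ^{δ+ρ} s(s−δ)^{p−1} ψ(s) ds. If ψ is positive on [δ, δ+ρ], then (∂I₁/∂ρ)(∂I₂/∂δ) − (∂I₁/∂δ)(∂I₂/∂ρ) < 0. -/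
open MeasureTheory Real

/-- The determinant of partial derivatives of the constraint functions `I₁, I₂`
in the Lagrange multiplier system of the dynamic mean-LPM problem (`q > 1`) is
negative: `(∂I₁/∂ρ)(∂I₂/∂δ) − (∂I₁/∂δ)(∂I₂/∂ρ) < 0` when the density `ψ` is
positive on `[δ, δ+ρ]`. -/
theorem stmt_6 (ψ : ℝ → ℝ) (hψc : Continuous ψ) (hψ0 : ∀ x, 0 ≤ ψ x)
    (hψprob : (∫ s in Set.Ioi (0 : ℝ), ψ s) = 1)
    (p γ B δ ρ : ℝ) (hp : 0 < p) (hγ : 0 < γ) (hB : γ < B) (hδ : 0 < δ) (hρ : 0 < ρ)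
    (hψpos : ∀ s ∈ Set.Icc δ (δ + ρ), 0 < ψ s) :
    ((p * γ / ρ ^ (p + 1)) * ∫ s in Set.Icc δ (δ + ρ), (s - δ) ^ p * ψ s) *
        ((B - γ) * δ * ψ δ +
          (p * γ / ρ ^ p) * ∫ s in Set.Icc δ (δ + ρ), s * (s - δ) ^ (p - 1) * ψ s) -
      ((B - γ) * ψ δ +
          (p * γ / ρ ^ p) * ∫ s in Set.Icc δ (δ + ρ), (s - δ) ^ (p - 1) * ψ s) *
        ((p * γ / ρ ^ (p + 1)) * ∫ s in Set.Icc δ (δ + ρ), s * (s - δ) ^ p * ψ s) < 0 := by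
  have hxpos : ∀ s ∈ Set.Ioc δ (δ + ρ), 0 < s - δ := fun s hs => sub_pos.2 hs.1
  have key1 : ∀ x : ℝ, x ≠ 0 → x ^ p = x ^ (p - 1) * x := by
    intro x hx
    rw [← Real.rpow_add_one hx (p - 1), sub_add_cancel]
  have key2 : ∀ x : ℝ, x ≠ 0 → x ^ (p + 1) = x ^ (p - 1) * (x * x) := by
    intro x hx
    rw [Real.rpow_add_one hx p, key1 x hx, mul_assoc]
  -- continuity
  have hcp : Continuous fun s : ℝ => (s - δ) ^ p :=
    (Real.continuous_rpow_const hp.le).comp (continuous_id.sub continuous_const)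
  have hcp1 : Continuous fun s : ℝ => (s - δ) ^ (p + 1) :=
    (Real.continuous_rpow_const (by linarith)).comp (continuous_id.sub continuous_const)
  -- integrability
  have hr : IntegrableOn (fun s => (s - δ) ^ (p - 1)) (Set.Ioc δ (δ + ρ)) := by
    have h0 : IntervalIntegrable (fun x : ℝ => x ^ (p - 1)) volume 0 ρ :=
      intervalIntegral.intervalIntegrable_rpow' (by linarith)
    have h1 := (h0.comp_sub_right δ).1
    simpa [zero_add, add_comm] using h1
  obtain ⟨C, hC⟩ :=
    (isCompact_Icc (a := δ) (b := δ + ρ)).exists_bound_of_continuousOn hψc.continuousOn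
  have hae : ∀ᵐ s ∂(volume.restrict (Set.Ioc δ (δ + ρ))), ‖ψ s‖ ≤ C := by
    filter_upwards [ae_restrict_mem measurableSet_Ioc] with s hs
    exact hC s (Set.Ioc_subset_Icc_self hs)
  have hw : IntegrableOn (fun s => (s - δ) ^ (p - 1) * ψ s) (Set.Ioc δ (δ + ρ)) := by
    have := hr.bdd_mul (hψc.aestronglyMeasurable.restrict) hae
    exact this.congr (ae_of_all _ fun s => mul_comm _ _)
  have hfw : IntegrableOn (fun s => (s - δ) ^ p * ψ s) (Set.Ioc δ (δ + ρ)) :=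
    (((hcp.mul hψc).continuousOn).integrableOn_compact isCompact_Icc).mono_set
      Set.Ioc_subset_Icc_self
  have hf2w : IntegrableOn (fun s => (s - δ) ^ (p + 1) * ψ s) (Set.Ioc δ (δ + ρ)) :=
    (((hcp1.mul hψc).continuousOn).integrableOn_compact isCompact_Icc).mono_set
      Set.Ioc_subset_Icc_self
  -- reduce Icc to Ioc
  simp only [MeasureTheory.integral_Icc_eq_integral_Ioc]
  set A := ∫ s in Set.Ioc δ (δ + ρ), (s - δ) ^ p * ψ s with hA
  set A' := ∫ s in Set.Ioc δ (δ + ρ), (s - δ) ^ (p - 1) * ψ s with hA'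
  set J := ∫ s in Set.Ioc δ (δ + ρ), (s - δ) ^ (p + 1) * ψ s with hJdef
  have hEq2 : (∫ s in Set.Ioc δ (δ + ρ), s * (s - δ) ^ p * ψ s) = δ * A + J := by
    have hcong : Set.EqOn (fun s => s * (s - δ) ^ p * ψ s)
        (fun s => δ * ((s - δ) ^ p * ψ s) + (s - δ) ^ (p + 1) * ψ s) (Set.Ioc δ (δ + ρ)) := by
      intro s hs
      have hx := (hxpos s hs).ne'
      simp only
      rw [Real.rpow_add_one hx p]; ring
    rw [setIntegral_congr_fun measurableSet_Ioc hcong,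
      integral_add (hfw.const_mul δ) hf2w, integral_const_mul, ← hA, ← hJdef]
  have hEq1 : (∫ s in Set.Ioc δ (δ + ρ), s * (s - δ) ^ (p - 1) * ψ s) = δ * A' + A := by
    have hcong : Set.EqOn (fun s => s * (s - δ) ^ (p - 1) * ψ s)
        (fun s => δ * ((s - δ) ^ (p - 1) * ψ s) + (s - δ) ^ p * ψ s) (Set.Ioc δ (δ + ρ)) := by
      intro s hs
      have hx := (hxpos s hs).ne'
      simp only
      rw [key1 _ hx]; ring
    rw [setIntegral_congr_fun measurableSet_Ioc hcong,
      integral_add (hw.const_mul δ) hfw, integral_const_mul, ← hA', ← hA]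
  rw [hEq1, hEq2]
  -- J > 0
  have hJ : 0 < J := by
    rw [hJdef, setIntegral_pos_iff_support_of_nonneg_ae ?_ hf2w]
    · refine lt_of_lt_of_le ?_ (measure_mono (Set.subset_inter ?_ Set.Subset.rfl))
      · simp [Real.volume_Ioc]; linarith
      · intro s hs
        exact (mul_pos (Real.rpow_pos_of_pos (hxpos s hs) _)
          (hψpos s (Set.Ioc_subset_Icc_self hs))).ne'
    · filter_upwards [ae_restrict_mem measurableSet_Ioc] with s hs
      exact mul_nonneg (Real.rpow_nonneg (hxpos s hs).le _) (hψ0 s)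
  -- Cauchy–Schwarz via discriminant
  have hQ : ∀ t : ℝ, 0 ≤ A' * (t * t) + (2 * A) * t + J := by
    intro t
    have hcong : Set.EqOn
        (fun s => (t * t) * ((s - δ) ^ (p - 1) * ψ s) + (2 * t) * ((s - δ) ^ p * ψ s)
          + (s - δ) ^ (p + 1) * ψ s)
        (fun s => ((s - δ) + t) ^ 2 * ((s - δ) ^ (p - 1) * ψ s)) (Set.Ioc δ (δ + ρ)) := by
      intro s hs
      have hx := (hxpos s hs).ne'
      simp only
      rw [key1 _ hx, key2 _ hx]; ring
    have hexp : A' * (t * t) + (2 * A) * t + J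
        = ∫ s in Set.Ioc δ (δ + ρ), ((s - δ) + t) ^ 2 * ((s - δ) ^ (p - 1) * ψ s) := by
      have hadd1 : IntegrableOn (fun s => t * t * ((s - δ) ^ (p - 1) * ψ s)
          + 2 * t * ((s - δ) ^ p * ψ s)) (Set.Ioc δ (δ + ρ)) :=
        (hw.const_mul _).add (hfw.const_mul _)
      rw [← setIntegral_congr_fun measurableSet_Ioc hcong,
        integral_add hadd1 hf2w,
        integral_add (hw.const_mul (t * t)) (hfw.const_mul (2 * t)),
        integral_const_mul, integral_const_mul, ← hA, ← hA', ← hJdef]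
      ring
    rw [hexp]
    refine setIntegral_nonneg measurableSet_Ioc fun s hs => ?_
    exact mul_nonneg (sq_nonneg _)
      (mul_nonneg (Real.rpow_nonneg (hxpos s hs).le _) (hψ0 s))
  have hCS : A * A ≤ A' * J := by
    have h := discrim_le_zero hQ
    rw [discrim] at h
    nlinarith [h]
  -- final computation
  have hk1 : 0 < p * γ / ρ ^ (p + 1) :=
    div_pos (mul_pos hp hγ) (Real.rpow_pos_of_pos hρ _)
  have hk2 : 0 < p * γ / ρ ^ p :=
    div_pos (mul_pos hp hγ) (Real.rpow_pos_of_pos hρ _)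
  have hψδ : 0 < ψ δ := hψpos δ ⟨le_refl δ, by linarith⟩
  have hBγ : 0 < B - γ := sub_pos.2 hB
  nlinarith [mul_pos hk1 (mul_pos (mul_pos hBγ hψδ) hJ),
    mul_nonneg (mul_pos hk1 hk2).le (sub_nonneg.2 hCS)]
end

section
/- Let Z be a positive random variable with E[Z] < ∞ and continuous distribution, 0 < γ < B, x₀ > 0. Define H_0(y) = P(Z ≤ y), H_1(y) = E[Z·1_{Z ≤ y}], and for δ in the feasible range define L(δ) = (B−γ)H_0(δ) + γ H_0(H_1^{−1}((x₀ − (B−γ)H_1(δ))/γ)). Then L is strictly monotonically increasing in δ on the interval where the inner expression lies in the range of H_1; specifically, for δ₂ < δ₁ in this interval, L(δ₁) − L(δ₂) ≥ (B−γ)·(ρ₁/(δ₁+ρ₁))·E[1_{δ₂ ≤ Z ≤ δ₁}] where δ₁ + ρ₁ = H_1^{−1}((x₀ − (B−γ)H_1(δ₁))/γ). -/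
open MeasureTheory ProbabilityTheory

/-! For every `x` the map `y ↦ E[(Z - x) 1_{Z ≤ y}]` is minimised at `y = x`, that is
`x (H₀ y - H₀ x) ≤ H₁ y - H₁ x` for all `x, y`. Taking `(x, y) = (δ₁ + ρ₁, δ₂ + ρ₂)` and
`(x, y) = (δ₁, δ₂)` in the difference of the two budget equations
`γ (H₁ (δ₂ + ρ₂) - H₁ (δ₁ + ρ₁)) = (B - γ) (H₁ δ₁ - H₁ δ₂)` gives
`γ (H₀ (δ₂ + ρ₂) - H₀ (δ₁ + ρ₁)) ≤ (B - γ) (δ₁ / (δ₁ + ρ₁)) (H₀ δ₁ - H₀ δ₂)`, and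
`H₀ δ₁ - H₀ δ₂ = P(δ₂ ≤ Z ≤ δ₁)` because `Z` has no atoms. -/

theorem le_sub_of_budget_eq {F₀ F₁ : ℝ → ℝ}
    (hsub : ∀ x y, x * (F₀ y - F₀ x) ≤ F₁ y - F₁ x)
    {c γ δ₁ δ₂ ρ b : ℝ} (hc : 0 ≤ c) (hγ : 0 ≤ γ) (hpos : 0 < δ₁ + ρ)
    (hbud : γ * (F₁ b - F₁ (δ₁ + ρ)) = c * (F₁ δ₁ - F₁ δ₂)) :
    c * (ρ / (δ₁ + ρ)) * (F₀ δ₁ - F₀ δ₂) ≤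
      (c * F₀ δ₁ + γ * F₀ (δ₁ + ρ)) - (c * F₀ δ₂ + γ * F₀ b) := by
  have key : (δ₁ + ρ) * (γ * (F₀ b - F₀ (δ₁ + ρ))) ≤ c * (δ₁ * (F₀ δ₁ - F₀ δ₂)) :=
    calc (δ₁ + ρ) * (γ * (F₀ b - F₀ (δ₁ + ρ)))
        = γ * ((δ₁ + ρ) * (F₀ b - F₀ (δ₁ + ρ))) := by ring
      _ ≤ γ * (F₁ b - F₁ (δ₁ + ρ)) := mul_le_mul_of_nonneg_left (hsub _ b) hγ
      _ = c * (F₁ δ₁ - F₁ δ₂) := hbud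
      _ ≤ c * (δ₁ * (F₀ δ₁ - F₀ δ₂)) := by gcongr; linarith [hsub δ₁ δ₂]
  rw [mul_div_assoc', div_mul_eq_mul_div, div_le_iff₀ hpos]
  linear_combination key

section
variable {Ω : Type*} [MeasurableSpace Ω] {μ : Measure Ω} [IsFiniteMeasure μ] {Z : Ω → ℝ}

theorem mul_measureReal_sub_le_integral_sub (hZm : Measurable Z) (hZi : Integrable Z μ)
    (x y : ℝ) :
    x * (μ.real {ω | Z ω ≤ y} - μ.real {ω | Z ω ≤ x}) ≤
      (∫ ω, if Z ω ≤ y then Z ω else 0 ∂μ) - ∫ ω, if Z ω ≤ x then Z ω else 0 ∂μ := by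
  have shift (t : ℝ) : (∫ ω, if Z ω ≤ t then Z ω else 0 ∂μ) - x * μ.real {ω | Z ω ≤ t} =
      ∫ ω, {ω | Z ω ≤ t}.indicator (fun ω => Z ω - x) ω ∂μ := by
    have hs : MeasurableSet {ω | Z ω ≤ t} := hZm measurableSet_Iic
    rw [integral_indicator hs, integral_sub hZi.integrableOn (integrable_const x),
      setIntegral_const, ← integral_indicator hs, smul_eq_mul, mul_comm]
    congr 2 with ω
  have mono : ∫ ω, {ω | Z ω ≤ x}.indicator (fun ω => Z ω - x) ω ∂μ ≤
      ∫ ω, {ω | Z ω ≤ y}.indicator (fun ω => Z ω - x) ω ∂μ := by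
    refine integral_mono ((hZi.sub (integrable_const x)).indicator (hZm measurableSet_Iic))
      ((hZi.sub (integrable_const x)).indicator (hZm measurableSet_Iic)) fun ω => ?_
    simp only [Set.indicator_apply, Set.mem_ofPred_eq]
    split_ifs <;> linarith
  linarith [shift x, shift y]

theorem measureReal_le_and_le_eq_sub (hZm : Measurable Z) {a b : ℝ} (hab : a ≤ b)
    (ha : μ {ω | Z ω = a} = 0) :
    μ.real {ω | a ≤ Z ω ∧ Z ω ≤ b} = μ.real {ω | Z ω ≤ b} - μ.real {ω | Z ω ≤ a} := by
  have hsplit : {ω | a ≤ Z ω ∧ Z ω ≤ b} = {ω | Z ω = a} ∪ ({ω | Z ω ≤ b} \ {ω | Z ω ≤ a}) := by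
    ext ω
    simp only [Set.mem_ofPred_eq, Set.mem_union, Set.mem_sdiff, not_le]
    grind
  rw [hsplit, measureReal_congr (union_ae_eq_right_of_ae_eq_empty (ae_eq_empty.mpr ha))]
  exact measureReal_sdiff (fun ω (h : Z ω ≤ a) => h.trans hab) (hZm measurableSet_Iic)

end

theorem stmt_18_general {Ω : Type*} [MeasureSpace Ω] [IsProbabilityMeasure (ℙ : Measure Ω)]
    (Z : Ω → ℝ) (hZm : Measurable Z) (hZint : Integrable Z)
    (hcont : ∀ c : ℝ, ℙ {ω | Z ω = c} = 0)
    (γ B x₀ : ℝ) (hγ : 0 < γ) (hB : γ < B)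
    (H₀ H₁ : ℝ → ℝ)
    (hH₀ : ∀ y, H₀ y = (ℙ {ω | Z ω ≤ y}).toReal)
    (hH₁ : ∀ y, H₁ y = ∫ ω, if Z ω ≤ y then Z ω else 0)
    (δ₁ δ₂ ρ₁ ρ₂ : ℝ) (hδ₂0 : 0 ≤ δ₂) (hδ : δ₂ < δ₁) (hρ₁ : 0 < ρ₁)
    (hbud₁ : H₁ (δ₁ + ρ₁) = (x₀ - (B - γ) * H₁ δ₁) / γ)
    (hbud₂ : H₁ (δ₂ + ρ₂) = (x₀ - (B - γ) * H₁ δ₂) / γ) :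
    (B - γ) * (ρ₁ / (δ₁ + ρ₁)) * (ℙ {ω | δ₂ ≤ Z ω ∧ Z ω ≤ δ₁}).toReal ≤
      ((B - γ) * H₀ δ₁ + γ * H₀ (δ₁ + ρ₁)) - ((B - γ) * H₀ δ₂ + γ * H₀ (δ₂ + ρ₂)) := by
  have hsub (x y : ℝ) : x * (H₀ y - H₀ x) ≤ H₁ y - H₁ x := by
    simpa only [hH₀, hH₁, ← measureReal_def] using
      mul_measureReal_sub_le_integral_sub hZm hZint x y
  have hbud : γ * (H₁ (δ₂ + ρ₂) - H₁ (δ₁ + ρ₁)) = (B - γ) * (H₁ δ₁ - H₁ δ₂) := by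
    rw [hbud₁, hbud₂]
    field_simp
    ring
  have hP : (ℙ {ω | δ₂ ≤ Z ω ∧ Z ω ≤ δ₁}).toReal = H₀ δ₁ - H₀ δ₂ := by
    rw [hH₀, hH₀]
    exact measureReal_le_and_le_eq_sub hZm hδ.le (hcont δ₂)
  rw [hP]
  exact le_sub_of_budget_eq hsub (by linarith) hγ.le (by linarith) hbud

/-- Monotonicity of `L(δ) = (B-γ)H₀(δ) + γ H₀(H₁⁻¹((x₀ - (B-γ)H₁(δ))/γ))` along the
budget constraint: writing `δᵢ + ρᵢ = H₁⁻¹((x₀ - (B-γ)H₁(δᵢ))/γ)` (i.e. `ρᵢ > 0`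
satisfies `H₁(δᵢ + ρᵢ) = (x₀ - (B-γ)H₁(δᵢ))/γ`), for `δ₂ < δ₁` one has
`L(δ₁) - L(δ₂) ≥ (B-γ)(ρ₁/(δ₁+ρ₁)) E[1_{δ₂ ≤ Z ≤ δ₁}]`. -/
theorem stmt_18 {Ω : Type*} [MeasureSpace Ω] [IsProbabilityMeasure (ℙ : Measure Ω)]
    (Z : Ω → ℝ) (hZm : Measurable Z) (hZpos : ∀ ω, 0 < Z ω) (hZint : Integrable Z)
    (hcont : ∀ c : ℝ, ℙ {ω | Z ω = c} = 0)
    (γ B x₀ : ℝ) (hγ : 0 < γ) (hB : γ < B) (hx₀ : 0 < x₀)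
    (H₀ H₁ : ℝ → ℝ)
    (hH₀ : ∀ y, H₀ y = (ℙ {ω | Z ω ≤ y}).toReal)
    (hH₁ : ∀ y, H₁ y = ∫ ω, if Z ω ≤ y then Z ω else 0)
    (δ₁ δ₂ ρ₁ ρ₂ : ℝ) (hδ₂0 : 0 ≤ δ₂) (hδ : δ₂ < δ₁) (hρ₁ : 0 < ρ₁) (hρ₂ : 0 < ρ₂)
    (hbud₁ : H₁ (δ₁ + ρ₁) = (x₀ - (B - γ) * H₁ δ₁) / γ)
    (hbud₂ : H₁ (δ₂ + ρ₂) = (x₀ - (B - γ) * H₁ δ₂) / γ) :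
    (B - γ) * (ρ₁ / (δ₁ + ρ₁)) * (ℙ {ω | δ₂ ≤ Z ω ∧ Z ω ≤ δ₁}).toReal ≤
      ((B - γ) * H₀ δ₁ + γ * H₀ (δ₁ + ρ₁)) - ((B - γ) * H₀ δ₂ + γ * H₀ (δ₂ + ρ₂)) :=
  stmt_18_general Z hZm hZint hcont γ B x₀ hγ hB H₀ H₁ hH₀ hH₁ δ₁ δ₂ ρ₁ ρ₂ hδ₂0 hδ hρ₁ hbud₁ hbud₂
end
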